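/- Let x be a C¹ solution of the first-order singular Cucker–Smale system whose initial positions and natural velocities are strictly increasing: x_1(0) < x_2(0) < … < x_N(0) and ν_1 < ν_2 < … < ν_N. Then for all t ≥ 0, min_{i ≠ j} |x_i(t) − x_j(t)| ≥ C'_{m1}, where C'_{m1} = min_{1 ≤ i ≤ N−1} min{ x_{i+1}(0) − x_i(0), ((1−β)(ν_{i+1} − ν_i)/κ)^{1/(1−β)} } > 0. -/

import Mathlib

open Real Filter Set Topology

/-!
No particle lies strictly between two neighbours `x_i < x_{i+1}`, so oddness and subadditivity
of `Ψ` bound the interaction part of the velocity difference `x_{i+1}' - x_i'` below by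
`-κ Ψ(x_{i+1} - x_i)`: the gap cannot shrink while `Ψ(gap) ≤ (ν_{i+1} - ν_i)/κ`. A barrier
argument, run by continuous induction in time on all neighbouring gaps at once (their positivity
is what keeps the particles ordered), keeps each gap above
`min {x_{i+1}(0) - x_i(0), Ψ⁻¹((ν_{i+1} - ν_i)/κ)}`, and any other distance is a sum of gaps.
-/

/-- The interaction function `Ψ(x) = sign(x)·|x|^{1−β}/(1−β)`. -/
noncomputable def psiCS (β y : ℝ) : ℝ := Real.sign y * |y| ^ (1 - β) / (1 - β)

/-- A C¹ solution on `[0,∞)` of the first-order singular Cucker–Smale system: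
`x_i'(t) = ν_i + (κ/N) Σ_k Ψ(x_k(t) − x_i(t))`. -/
def IsCSSol (N : ℕ) (β κ : ℝ) (ν : Fin N → ℝ) (x : ℝ → Fin N → ℝ) : Prop :=
  (∀ i, ContDiffOn ℝ 1 (fun t => x t i) (Set.Ici 0)) ∧
  ∀ i, ∀ t ≥ (0:ℝ), HasDerivWithinAt (fun s => x s i)
    (ν i + (κ / (N:ℝ)) * ∑ k, psiCS β (x t k - x t i)) (Set.Ici 0) t

/-- The constant `C'_{m1} = min_{1 ≤ i ≤ N−1} min{x_{i+1}(0)−x_i(0), Ψ⁻¹((ν_{i+1}−ν_i)/κ)}`,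
taken over all adjacent pairs of indices. -/
noncomputable def Cm1 (N : ℕ) (β κ : ℝ) (ν : Fin N → ℝ) (x0 : Fin N → ℝ) : ℝ :=
  ⨅ p : {q : Fin N × Fin N // (q.1 : ℕ) + 1 = (q.2 : ℕ)},
    min (x0 p.1.2 - x0 p.1.1)
      (((1 - β) * (ν p.1.2 - ν p.1.1) / κ) ^ (1 / (1 - β)))

lemma psiCS_neg (β y : ℝ) : psiCS β (-y) = -psiCS β y := by
  simp [psiCS, Real.sign_neg, neg_div]

lemma psiCS_of_nonneg (β : ℝ) {y : ℝ} (hy : 0 ≤ y) : psiCS β y = y ^ (1 - β) / (1 - β) := by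
  rcases hy.eq_or_lt with rfl | hy
  · rcases eq_or_ne (1 - β) 0 with h | h <;> simp [psiCS, h]
  · rw [psiCS, Real.sign_of_pos hy, abs_of_pos hy, one_mul]

lemma psiCS_add_le {β : ℝ} (hβ0 : 0 ≤ β) (hβ1 : β < 1) {a b : ℝ} (ha : 0 ≤ a) (hb : 0 ≤ b) :
    psiCS β (a + b) ≤ psiCS β a + psiCS β b := by
  have hγ : 0 < 1 - β := by linarith
  rw [psiCS_of_nonneg β (add_nonneg ha hb), psiCS_of_nonneg β ha, psiCS_of_nonneg β hb, ← add_div]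
  gcongr
  have := NNReal.rpow_add_le_add_rpow ⟨a, ha⟩ ⟨b, hb⟩ hγ.le (by linarith)
  exact_mod_cast this

lemma psiCS_le_psiCS_sub_add {β : ℝ} (hβ0 : 0 ≤ β) (hβ1 : β < 1) {a d : ℝ} (hd : 0 ≤ d)
    (had : a ≤ 0 ∨ d ≤ a) : psiCS β a ≤ psiCS β (a - d) + psiCS β d := by
  rcases had with ha | ha
  · have := psiCS_add_le hβ0 hβ1 (neg_nonneg.2 ha) hd
    rw [psiCS_neg] at this
    rw [show a - d = -(-a + d) by ring, psiCS_neg]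
    linarith
  · simpa using psiCS_add_le hβ0 hβ1 (sub_nonneg.2 ha) hd

lemma psiCS_le_of_le_rpow {β : ℝ} (hβ1 : β < 1) {d z : ℝ} (hd : 0 ≤ d) (hz : 0 ≤ z)
    (h : d ≤ ((1 - β) * z) ^ (1 / (1 - β))) : psiCS β d ≤ z := by
  have hγ : 0 < 1 - β := by linarith
  rw [psiCS_of_nonneg β hd, div_le_iff₀ hγ]
  calc d ^ (1 - β) ≤ (((1 - β) * z) ^ (1 / (1 - β))) ^ (1 - β) := by gcongr
    _ = z * (1 - β) := by rw [one_div, rpow_inv_rpow (by positivity) hγ.ne', mul_comm]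

lemma sum_psiCS_sub_le {ι : Type*} [Fintype ι] {β : ℝ} (hβ0 : 0 ≤ β) (hβ1 : β < 1)
    (y : ι → ℝ) {i j : ι} (hij : y i ≤ y j) (hsep : ∀ k, y k ≤ y i ∨ y j ≤ y k) :
    ∑ k, psiCS β (y k - y i) ≤ ∑ k, psiCS β (y k - y j) + Fintype.card ι * psiCS β (y j - y i) := by
  calc ∑ k, psiCS β (y k - y i) ≤ ∑ k, (psiCS β (y k - y j) + psiCS β (y j - y i)) := by
        refine Finset.sum_le_sum fun k _ => ?_
        have := psiCS_le_psiCS_sub_add hβ0 hβ1 (sub_nonneg.2 hij) (a := y k - y i)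
          ((hsep k).imp sub_nonpos.2 (sub_le_sub_right · _))
        rwa [sub_sub_sub_cancel_right] at this
    _ = _ := by simp [Finset.sum_add_distrib]

noncomputable def csVelocity (N : ℕ) (β κ : ℝ) (ν y : Fin N → ℝ) (i : Fin N) : ℝ :=
  ν i + (κ / (N:ℝ)) * ∑ k, psiCS β (y k - y i)

lemma csVelocity_sub_nonneg {N : ℕ} {β κ : ℝ} (hβ0 : 0 ≤ β) (hβ1 : β < 1) (hκ : 0 < κ)
    {ν y : Fin N → ℝ} {i j : Fin N} (hyij : y i ≤ y j) (hsep : ∀ k, y k ≤ y i ∨ y j ≤ y k)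
    (hνij : ν i ≤ ν j) (hclose : y j - y i ≤ ((1 - β) * (ν j - ν i) / κ) ^ (1 / (1 - β))) :
    0 ≤ csVelocity N β κ ν y j - csVelocity N β κ ν y i := by
  have hN : (0:ℝ) < N := by exact_mod_cast i.pos
  have hsum := sum_psiCS_sub_le hβ0 hβ1 y hyij hsep
  rw [Fintype.card_fin] at hsum
  have hψ : psiCS β (y j - y i) ≤ (ν j - ν i) / κ :=
    psiCS_le_of_le_rpow hβ1 (sub_nonneg.2 hyij) (div_nonneg (sub_nonneg.2 hνij) hκ.le)
      (by rwa [← mul_div_assoc])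
  rw [le_div_iff₀ hκ] at hψ
  have : κ / N * ∑ k, psiCS β (y k - y i)
      ≤ κ / N * ∑ k, psiCS β (y k - y j) + κ * psiCS β (y j - y i) := by
    calc _ ≤ κ / N * (∑ k, psiCS β (y k - y j) + N * psiCS β (y j - y i)) := by gcongr
      _ = _ := by field_simp
  unfold csVelocity
  linarith

lemma le_image_of_deriv_right_nonneg_below {f f' : ℝ → ℝ} {a b m : ℝ}
    (hf : ContinuousOn f (Icc a b)) (hf' : ∀ x ∈ Ico a b, HasDerivWithinAt f (f' x) (Ici x) x)
    (ha : m ≤ f a) (hbelow : ∀ x ∈ Ico a b, f x < m → 0 ≤ f' x) :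
    ∀ ⦃x⦄, x ∈ Icc a b → m ≤ f x := by
  intro x hx
  refine le_of_forall_pos_le_add fun δ hδ => ?_
  -- compare `f` with the slowly decreasing fence `m - ε (t - a + 1)`, which it can never touch
  set ε := δ / (x - a + 1)
  have hε : 0 < ε := div_pos hδ (by linarith [hx.1])
  have hfence := image_le_of_deriv_right_lt_deriv_boundary' (f := fun t => m - ε * (t - a + 1))
    (f' := fun _ => -ε) (by fun_prop)
    (fun t _ => ((((hasDerivWithinAt_id t _).sub_const a).add_const 1).const_mul ε).const_sub m
      |>.congr_deriv (by simp)) (by norm_num; linarith) hf hf'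
    (fun t ht heq => by
      have : 0 < ε * (t - a + 1) := mul_pos hε (by linarith [ht.1])
      linarith [hbelow t ht (by linarith)]) hx
  have : ε * (x - a + 1) = δ := div_mul_cancel₀ δ (by linarith [hx.1])
  linarith

lemma le_image_of_deriv_right_nonneg_below_of_pos {ι : Type*} [Finite ι] {g g' : ι → ℝ → ℝ}
    {m : ι → ℝ} (hg : ∀ p, ContinuousOn (g p) (Ici 0))
    (hg' : ∀ p, ∀ t ≥ 0, HasDerivWithinAt (g p) (g' p t) (Ici t) t)
    (hm : ∀ p, 0 < m p) (h0 : ∀ p, m p ≤ g p 0)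
    (hbelow : ∀ t ≥ 0, (∀ q, 0 < g q t) → ∀ p, g p t < m p → 0 ≤ g' p t) :
    ∀ t ≥ 0, ∀ p, m p ≤ g p t := by
  intro T hT
  set s := {t | ∀ p, m p ≤ g p t}
  suffices Icc 0 T ⊆ s from this ⟨hT, le_rfl⟩
  refine IsClosed.Icc_subset_of_forall_mem_nhdsWithin ?_ h0 ?_
  · have hcont : ContinuousOn (fun t p => g p t) (Icc 0 T) :=
      continuousOn_pi.2 fun p => (hg p).mono Icc_subset_Ici_self
    convert hcont.preimage_isClosed_of_isClosed isClosed_Icc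
      (isClosed_Ici (a := m)) using 1
    ext t
    simp [s, and_comm, Pi.le_def]
  · rintro x ⟨hxs, hx0, -⟩
    have hpos : ∀ᶠ t in 𝓝[≥] x, ∀ q, 0 < g q t := eventually_all.2 fun q =>
      ((hg q x hx0).mono (Ici_subset_Ici.2 hx0)).eventually
        (eventually_gt_nhds ((hm q).trans_le (hxs q)))
    obtain ⟨u, hxu, hu⟩ := mem_nhdsGE_iff_exists_Ico_subset.1 hpos
    filter_upwards [Ioo_mem_nhdsGT hxu] with t ht p
    exact le_image_of_deriv_right_nonneg_below ((hg p).mono fun y hy => hx0.trans hy.1)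
      (fun y hy => hg' p y (hx0.trans hy.1)) (hxs p)
      (fun y hy => hbelow y (hx0.trans hy.1) (hu hy) p) (Ioo_subset_Icc_self ht)

lemma IsCSSol.min_le_gap {n : ℕ} {β κ : ℝ} {ν : Fin (n + 1) → ℝ} {x : ℝ → Fin (n + 1) → ℝ}
    (hx : IsCSSol (n + 1) β κ ν x) (hβ0 : 0 ≤ β) (hβ1 : β < 1) (hκ : 0 < κ)
    (hν : StrictMono ν) (hx0 : StrictMono (x 0)) :
    ∀ t ≥ 0, ∀ i : Fin n, min (x 0 i.succ - x 0 i.castSucc)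
      (((1 - β) * (ν i.succ - ν i.castSucc) / κ) ^ (1 / (1 - β)))
        ≤ x t i.succ - x t i.castSucc := by
  have hγ : 0 < 1 - β := by linarith
  refine le_image_of_deriv_right_nonneg_below_of_pos
    (g' := fun i t => csVelocity (n + 1) β κ ν (x t) i.succ
      - csVelocity (n + 1) β κ ν (x t) i.castSucc)
    (fun i => (hx.1 _).continuousOn.sub (hx.1 _).continuousOn)
    (fun i t ht => ((hx.2 _ t ht).sub (hx.2 _ t ht)).mono (Ici_subset_Ici.2 ht))
    (fun i => lt_min (sub_pos.2 (hx0 i.castSucc_lt_succ))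
      (rpow_pos_of_pos (div_pos (mul_pos hγ (sub_pos.2 (hν i.castSucc_lt_succ))) hκ) _))
    (fun i => min_le_left _ _) ?_
  intro t _ hpos i hclose
  have hmono : StrictMono (x t) := Fin.strictMono_iff_lt_succ.2 fun q => sub_pos.1 (hpos q)
  refine csVelocity_sub_nonneg hβ0 hβ1 hκ (hmono i.castSucc_lt_succ).le (fun k => ?_)
    (hν i.castSucc_lt_succ).le (hclose.le.trans (min_le_right _ _))
  rcases le_or_gt k i.castSucc with hk | hk
  · exact Or.inl (hmono.monotone hk)
  · exact Or.inr (hmono.monotone (Fin.castSucc_lt_iff_succ_le.1 hk))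

lemma Cm1_pos {N : ℕ} (hN : 2 ≤ N) {β κ : ℝ} (hβ1 : β < 1) (hκ : 0 < κ) {ν x0 : Fin N → ℝ}
    (hν : StrictMono ν) (hx0 : StrictMono x0) : 0 < Cm1 N β κ ν x0 := by
  have : Nonempty {q : Fin N × Fin N // (q.1 : ℕ) + 1 = (q.2 : ℕ)} :=
    ⟨⟨(⟨0, by omega⟩, ⟨1, by omega⟩), rfl⟩⟩
  obtain ⟨p, hp⟩ := exists_eq_ciInf_of_finite (f := fun p :
    {q : Fin N × Fin N // (q.1 : ℕ) + 1 = (q.2 : ℕ)} =>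
      min (x0 p.1.2 - x0 p.1.1) (((1 - β) * (ν p.1.2 - ν p.1.1) / κ) ^ (1 / (1 - β))))
  have hlt : p.1.1 < p.1.2 := Fin.lt_def.2 (by omega)
  rw [Cm1, ← hp]
  exact lt_min (sub_pos.2 (hx0 hlt))
    (rpow_pos_of_pos (div_pos (mul_pos (by linarith) (sub_pos.2 (hν hlt))) hκ) _)

lemma Cm1_le {N : ℕ} (β κ : ℝ) (ν x0 : Fin N → ℝ) {i j : Fin N} (hij : (i : ℕ) + 1 = j) :
    Cm1 N β κ ν x0 ≤ min (x0 j - x0 i) (((1 - β) * (ν j - ν i) / κ) ^ (1 / (1 - β))) :=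
  ciInf_le (f := fun p : {q : Fin N × Fin N // (q.1 : ℕ) + 1 = (q.2 : ℕ)} =>
      min (x0 p.1.2 - x0 p.1.1) (((1 - β) * (ν p.1.2 - ν p.1.1) / κ) ^ (1 / (1 - β))))
    (Set.finite_range _).bddBelow ⟨(i, j), hij⟩

lemma le_abs_sub_of_le_sub_succ {n : ℕ} {f : Fin (n + 1) → ℝ} {C : ℝ} (hC : 0 ≤ C)
    (h : ∀ i : Fin n, C ≤ f i.succ - f i.castSucc) {k l : Fin (n + 1)} (hkl : k ≠ l) :
    C ≤ |f k - f l| := by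
  have hmono : Monotone fun i : Fin (n + 1) => f i - C * i :=
    Fin.monotone_iff_le_succ.2 fun i => by simp; linarith [h i]
  have key : ∀ {k l : Fin (n + 1)}, k < l → C ≤ f l - f k := fun {k l} hlt => by
    have h1 : (k : ℝ) + 1 ≤ l := by exact_mod_cast Fin.lt_def.1 hlt
    nlinarith [hmono hlt.le]
  rcases hkl.lt_or_gt with hlt | hlt
  · exact le_abs.2 (Or.inr (by linarith [key hlt]))
  · exact le_abs.2 (Or.inl (key hlt))

/-- Uniform-in-time lower bound on pairwise distances under strictly increasing
initial positions and natural velocities. -/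
theorem stmt5 (N : ℕ) (hN : 2 ≤ N) (β κ : ℝ) (hβ0 : 0 < β) (hβ1 : β < 1)
    (hκ : 0 < κ) (ν : Fin N → ℝ) (x : ℝ → Fin N → ℝ) (hx : IsCSSol N β κ ν x)
    (hx0 : StrictMono (x 0)) (hν : StrictMono ν) :
    0 < Cm1 N β κ ν (x 0) ∧
    ∀ t ≥ (0:ℝ), ∀ i j : Fin N, i ≠ j → Cm1 N β κ ν (x 0) ≤ |x t i - x t j| := by
  obtain ⟨n, rfl⟩ : ∃ n, N = n + 1 := ⟨N - 1, by omega⟩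
  have hC := Cm1_pos hN hβ1 hκ hν hx0
  refine ⟨hC, fun t ht i j hij => le_abs_sub_of_le_sub_succ hC.le (fun k => ?_) hij⟩
  exact (Cm1_le β κ ν (x 0) (by simp)).trans (hx.min_le_gap hβ0.le hβ1 hκ hν hx0 t ht k)
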